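/- There exists a finite Tantrix rotation puzzle configuration (the BOOL subpuzzle) with one designated boundary output edge, such that the configuration has exactly two solutions: in one solution the output edge shows blue and in the other it shows red; in particular, no solution shows yellow or green on the output edge. -/
import Mathlib


/-! Shared definitions for the Tantrix rotation puzzle formalization. -/

/-- The four Tantrix colors, encoded as `Fin 4`. -/
def red : Fin 4 := 0
def yellow : Fin 4 := 1
def blue : Fin 4 := 2
def green : Fin 4 := 3

/-- A Tantrix tile assigns a color to each of the six edges of a hexagon such
that exactly three colors occur, each on exactly two edges. -/
def IsTile (t : ZMod 6 → Fin 4) : Prop :=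
  (Finset.univ.filter (fun c : Fin 4 => ∃ i, t i = c)).card = 3 ∧
  ∀ c : Fin 4, (∃ i, t i = c) →
    (Finset.univ.filter (fun i : ZMod 6 => t i = c)).card = 2

/-- Rotating a tile by `k ∈ ZMod 6`. -/
def rotTile (t : ZMod 6 → Fin 4) (k : ZMod 6) : ZMod 6 → Fin 4 :=
  fun i => t (i + k)

/-- The fixed enumeration of the six neighbor offsets in the hexagonal grid. -/
def offset (d : ZMod 6) : ℤ × ℤ :=
  match d.val with
  | 0 => (0, 1)
  | 1 => (1, 1)
  | 2 => (1, 0)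
  | 3 => (0, -1)
  | 4 => (-1, -1)
  | _ => (-1, 0)

/-- The neighbor of position `q` in direction `d`. -/
def addOffset (q : ℤ × ℤ) (d : ZMod 6) : ℤ × ℤ :=
  (q.1 + (offset d).1, q.2 + (offset d).2)

/-- A finite Tantrix rotation puzzle instance: a function from a finite shape
`S ⊆ ℤ × ℤ` to Tantrix tiles. -/
structure Puzzle where
  shape : Finset (ℤ × ℤ)
  tile : ℤ × ℤ → ZMod 6 → Fin 4
  tile_isTile : ∀ q ∈ shape, IsTile (tile q)

/-- A solution of a rotation puzzle instance: a rotation for each tile such that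
colors match at every joint edge of two adjacent tiles. -/
def Puzzle.Sol (A : Puzzle) (r : {q // q ∈ A.shape} → ZMod 6) : Prop :=
  ∀ (q : {q // q ∈ A.shape}) (d : ZMod 6) (h : addOffset q.val d ∈ A.shape),
    rotTile (A.tile q.val) (r q) d =
      rotTile (A.tile (addOffset q.val d)) (r ⟨addOffset q.val d, h⟩) (d + 3)

/-- `#TRP(A)`: the number of solutions of the rotation puzzle instance `A`. -/
noncomputable def Puzzle.numSolutions (A : Puzzle) : ℕ :=
  Nat.card {r : {q // q ∈ A.shape} → ZMod 6 // A.Sol r}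

/-- The color shown by the (rotated) tile at position `q` on its edge in
direction `d`, in the solution candidate `r`. -/
def edgeColor (A : Puzzle) (r : {q // q ∈ A.shape} → ZMod 6)
    (q : {q // q ∈ A.shape}) (d : ZMod 6) : Fin 4 :=
  rotTile (A.tile q.val) (r q) d

/-- Propositional formulas, built from variables by ¬, ∧, ∨. -/
inductive PropForm where
  | var : ℕ → PropForm
  | not : PropForm → PropForm
  | and : PropForm → PropForm → PropForm
  | or : PropForm → PropForm → PropForm

/-- The variables occurring in a formula. -/
def PropForm.vars : PropForm → Finset ℕ
  | .var v => {v}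
  | .not p => p.vars
  | .and p q => p.vars ∪ q.vars
  | .or p q => p.vars ∪ q.vars

/-- Evaluation of a formula under a (total) assignment. -/
def PropForm.eval (a : ℕ → Bool) : PropForm → Bool
  | .var v => a v
  | .not p => !(p.eval a)
  | .and p q => p.eval a && q.eval a
  | .or p q => p.eval a || q.eval a

/-- The size (number of symbols) of a formula. -/
def PropForm.size : PropForm → ℕ
  | .var _ => 1
  | .not p => p.size + 1
  | .and p q => p.size + q.size + 1
  | .or p q => p.size + q.size + 1

/-- A satisfying assignment of `φ` is a function from the variables of `φ`
to `Bool` making `φ` true. -/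
def PropForm.Sat (φ : PropForm) (a : {v // v ∈ φ.vars} → Bool) : Prop :=
  φ.eval (fun v => if h : v ∈ φ.vars then a ⟨v, h⟩ else false) = true

/-- `#SAT(φ)`: the number of satisfying assignments of `φ`. -/
noncomputable def PropForm.numSat (φ : PropForm) : ℕ :=
  Nat.card {a : {v // v ∈ φ.vars} → Bool // φ.Sat a}

/-- A gate instruction of a boolean circuit: `AND(j,k)`, `OR(j,k)`, or
`NOT(j)`, with 1-based gate indices `j`, `k`. -/
inductive Instr where
  | and : ℕ → ℕ → Instr
  | or : ℕ → ℕ → Instr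
  | not : ℕ → Instr
  deriving DecidableEq

/-- A boolean circuit over AND, OR, NOT with `numInputs` inputs: it is the
sequence `(α_1, …, α_m)` where `α_i = x_i` for `1 ≤ i ≤ numInputs` and the
remaining `α_i`, listed in `gates`, are gate instructions referring to earlier
gates (`j ≤ k < i`). Its size is `m = numInputs + gates.length`. -/
structure Circuit where
  numInputs : ℕ
  gates : List Instr
  wf : ∀ i (h : i < gates.length),
    match gates.get ⟨i, h⟩ with
    | .and j k => 1 ≤ j ∧ j ≤ k ∧ k ≤ numInputs + i
    | .or j k => 1 ≤ j ∧ j ≤ k ∧ k ≤ numInputs + i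
    | .not j => 1 ≤ j ∧ j ≤ numInputs + i

/-- The size `m` of a circuit. -/
def Circuit.size (C : Circuit) : ℕ := C.numInputs + C.gates.length

/-- The value computed by a gate instruction from the list `vs` of the values
of all earlier gates (`vs.getD (j-1) false` is the value of gate `j`). -/
def Instr.apply (vs : List Bool) : Instr → Bool
  | .and j k => (vs.getD (j - 1) false) && (vs.getD (k - 1) false)
  | .or j k => (vs.getD (j - 1) false) || (vs.getD (k - 1) false)
  | .not j => !(vs.getD (j - 1) false)

/-- The list of the values of all gates `α_1, …, α_m` of `C` under the input
assignment `a`, defined recursively in the standard way. -/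
def Circuit.values (C : Circuit) (a : Fin C.numInputs → Bool) : List Bool :=
  C.gates.foldl (fun vs g => vs ++ [g.apply vs]) (List.ofFn a)

/-- The value of the output gate `α_m` of `C` under the assignment `a`. -/
def Circuit.output (C : Circuit) (a : Fin C.numInputs → Bool) : Bool :=
  (C.values a).getD (C.size - 1) false

/-- `a` satisfies `C` if the output gate `α_m` evaluates to true. -/
def Circuit.Sat (C : Circuit) (a : Fin C.numInputs → Bool) : Prop :=
  C.output a = true

/-- The number of satisfying assignments of a circuit. -/
noncomputable def Circuit.numSat (C : Circuit) : ℕ :=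
  Nat.card {a : Fin C.numInputs → Bool // C.Sat a}

/-- A circuit over AND and NOT gates only (no OR gates). -/
def Circuit.NoOr (C : Circuit) : Prop :=
  ∀ g ∈ C.gates, ∀ j k, g ≠ Instr.or j k

instance (t : ZMod 6 → Fin 4) : Decidable (IsTile t) := by
  unfold IsTile; infer_instance

instance (A : Puzzle) (r : {q // q ∈ A.shape} → ZMod 6) : Decidable (A.Sol r) := by
  unfold Puzzle.Sol; infer_instance

def tA : ZMod 6 → Fin 4 := ![0,3,0,3,2,2]
def tB : ZMod 6 → Fin 4 := ![3,3,2,0,2,0]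
def tC : ZMod 6 → Fin 4 := ![0,2,2,0,1,1]

def boolPuzzle : Puzzle where
  shape := {((0:ℤ),(0:ℤ)), (0,1), (1,1)}
  tile := fun q => if q = ((0:ℤ),(1:ℤ)) then tB else if q = ((1:ℤ),(1:ℤ)) then tC else tA
  tile_isTile := by decide

set_option maxRecDepth 10000 in
/-- the BOOL subpuzzle: a configuration with one boundary output
edge that has exactly two solutions, one showing blue at the output edge and
one showing red; in particular no solution shows yellow or green there. -/
theorem bool_subpuzzle :
    ∃ (A : Puzzle) (qo : {q // q ∈ A.shape}) (dout : ZMod 6),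
      addOffset qo.val dout ∉ A.shape ∧
      ∃ r₁ r₂ : {q // q ∈ A.shape} → ZMod 6,
        A.Sol r₁ ∧ A.Sol r₂ ∧ r₁ ≠ r₂ ∧
        edgeColor A r₁ qo dout = blue ∧
        edgeColor A r₂ qo dout = red ∧
        (∀ r, A.Sol r → r = r₁ ∨ r = r₂) := by
  refine ⟨boolPuzzle, ⟨((0:ℤ),(0:ℤ)), by decide⟩, 2, by decide,
    (fun q => if q.val = ((0:ℤ),(1:ℤ)) then 3 else if q.val = ((1:ℤ),(1:ℤ)) then 4 else 3),
    (fun q => if q.val = ((0:ℤ),(1:ℤ)) then 1 else if q.val = ((1:ℤ),(1:ℤ)) then 4 else 4),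
    by decide, by decide, by decide, by decide, by decide, by decide⟩
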